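/- Let H = [[A, B], [Bᵀ, C]] be a real symmetric positive definite matrix of size (r+s)×(r+s), where A is r×r symmetric, C is s×s symmetric, and B is r×s, and suppose λ‖x‖₂² ≤ xᵀHx for all x ∈ ℝ^{r+s}, with λ > 0. Then, with S = C − Bᵀ·A⁻¹·B the Schur complement, ‖A⁻¹·B·S⁻¹·Bᵀ·A⁻¹‖₂ ≤ ‖A⁻¹‖₂ + ‖H⁻¹‖₂ ≤ 2/λ, where ‖·‖₂ denotes the ℓ² operator norm (largest singular value). -/

import Mathlib

open Matrix

/-- The Euclidean norm of a real vector. -/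
noncomputable def euclNorm {n : Type*} [Fintype n] (v : n → ℝ) : ℝ :=
  Real.sqrt (v ⬝ᵥ v)

/-- The ℓ² operator norm (largest singular value) of a real matrix:
the supremum of `‖M·x‖₂` over Euclidean-unit vectors `x`. -/
noncomputable def opNorm2 {m n : Type*} [Fintype m] [Fintype n]
    (M : Matrix m n ℝ) : ℝ :=
  sSup {t | ∃ x : n → ℝ, euclNorm x = 1 ∧ t = euclNorm (M *ᵥ x)}

section Helpers

variable {n m : Type*} [Fintype n] [Fintype m]

noncomputable def toE (v : n → ℝ) : EuclideanSpace ℝ n := (WithLp.equiv 2 (n → ℝ)).symm v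

lemma dot_eq_inner (u v : n → ℝ) : u ⬝ᵥ v = inner ℝ (toE u) (toE v) := by
  simp [toE, PiLp.inner_apply, dotProduct, RCLike.inner_apply, mul_comm]

lemma euclNorm_eq (v : n → ℝ) : euclNorm v = ‖toE v‖ := by
  rw [euclNorm, dot_eq_inner, real_inner_self_eq_norm_mul_norm,
    Real.sqrt_mul_self (norm_nonneg _)]

lemma euclNorm_nonneg (v : n → ℝ) : 0 ≤ euclNorm v := Real.sqrt_nonneg _

lemma dot_self_nonneg (v : n → ℝ) : 0 ≤ v ⬝ᵥ v :=
  Finset.sum_nonneg fun i _ => mul_self_nonneg _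

lemma dot_le_norms (u v : n → ℝ) : u ⬝ᵥ v ≤ euclNorm u * euclNorm v := by
  rw [dot_eq_inner, euclNorm_eq, euclNorm_eq]; exact real_inner_le_norm _ _

noncomputable def matCLM [DecidableEq n] (M : Matrix m n ℝ) : EuclideanSpace ℝ n →L[ℝ] EuclideanSpace ℝ m :=
  LinearMap.toContinuousLinearMap (Matrix.toEuclideanLin M)

lemma toE_mulVec [DecidableEq n] (M : Matrix m n ℝ) (x : n → ℝ) : toE (M *ᵥ x) = matCLM M (toE x) := by
  simp [matCLM, toE]

lemma bddAbove_opSet [DecidableEq n] (M : Matrix m n ℝ) :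
    BddAbove {t | ∃ x : n → ℝ, euclNorm x = 1 ∧ t = euclNorm (M *ᵥ x)} := by
  refine ⟨‖matCLM M‖, ?_⟩
  rintro t ⟨x, hx, rfl⟩
  rw [euclNorm_eq, toE_mulVec]
  calc ‖matCLM M (toE x)‖ ≤ ‖matCLM M‖ * ‖toE x‖ := (matCLM M).le_opNorm _
  _ = ‖matCLM M‖ := by rw [← euclNorm_eq, hx, mul_one]

lemma le_opNorm2 [DecidableEq n] (M : Matrix m n ℝ) {x : n → ℝ} (hx : euclNorm x = 1) :
    euclNorm (M *ᵥ x) ≤ opNorm2 M :=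
  le_csSup (bddAbove_opSet M) ⟨x, hx, rfl⟩

lemma opNorm2_le [DecidableEq n] {M : Matrix m n ℝ} {c : ℝ} (hc : 0 ≤ c)
    (h : ∀ x, euclNorm x = 1 → euclNorm (M *ᵥ x) ≤ c) : opNorm2 M ≤ c :=
  Real.sSup_le (by rintro t ⟨x, hx, rfl⟩; exact h x hx) hc

lemma opNorm2_nonneg (M : Matrix m n ℝ) : 0 ≤ opNorm2 M :=
  Real.sSup_nonneg (by rintro t ⟨x, hx, rfl⟩; exact euclNorm_nonneg _)

lemma invBound {k : Type*} [Fintype k] [DecidableEq k] {M : Matrix k k ℝ}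
    (hM : IsUnit M.det) {lam : ℝ} (hlam : 0 < lam)
    (h : ∀ x, lam * (x ⬝ᵥ x) ≤ x ⬝ᵥ (M *ᵥ x)) : opNorm2 M⁻¹ ≤ 1 / lam := by
  apply opNorm2_le (by positivity)
  intro y hy
  set x := M⁻¹ *ᵥ y with hxdef
  have hMx : M *ᵥ x = y := by
    rw [hxdef, mulVec_mulVec, mul_nonsing_inv _ hM, one_mulVec]
  have h1 : lam * (x ⬝ᵥ x) ≤ x ⬝ᵥ y := by rw [← hMx]; exact h x
  have h2 : x ⬝ᵥ y ≤ euclNorm x * euclNorm y := dot_le_norms _ _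
  have h3 : x ⬝ᵥ x = euclNorm x * euclNorm x := by
    rw [euclNorm, Real.mul_self_sqrt (dot_self_nonneg _)]
  have hn : 0 ≤ euclNorm x := euclNorm_nonneg x
  rw [le_div_iff₀ hlam]
  rcases hn.eq_or_lt with h0 | h0
  · rw [← h0]; nlinarith
  · nlinarith [hy, h1, h2, h3, h0]

end Helpers

/-- For a symmetric positive definite `H = [[A,B],[Bᵀ,C]]` with `λ‖x‖² ≤ xᵀHx`,
and Schur complement `S = C − Bᵀ·A⁻¹·B`, one has
`‖A⁻¹·B·S⁻¹·Bᵀ·A⁻¹‖₂ ≤ ‖A⁻¹‖₂ + ‖H⁻¹‖₂ ≤ 2/λ`. -/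
theorem schur_complement_inverse_norm_bound {r s : ℕ}
    (A : Matrix (Fin r) (Fin r) ℝ) (B : Matrix (Fin r) (Fin s) ℝ)
    (C : Matrix (Fin s) (Fin s) ℝ)
    (hAsymm : A.IsSymm) (hCsymm : C.IsSymm)
    (lam : ℝ) (hlam : 0 < lam)
    (hH : (fromBlocks A B Bᵀ C).PosDef)
    (hlo : ∀ x : Fin r ⊕ Fin s → ℝ,
      lam * (x ⬝ᵥ x) ≤ x ⬝ᵥ (fromBlocks A B Bᵀ C *ᵥ x)) :
    opNorm2 (A⁻¹ * B * (C - Bᵀ * A⁻¹ * B)⁻¹ * Bᵀ * A⁻¹) ≤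
      opNorm2 A⁻¹ + opNorm2 (fromBlocks A B Bᵀ C)⁻¹ ∧
    opNorm2 A⁻¹ + opNorm2 (fromBlocks A B Bᵀ C)⁻¹ ≤ 2 / lam := by
  have hAh : A.IsHermitian := by
    rw [IsHermitian, conjTranspose_eq_transpose_of_trivial]; exact hAsymm
  -- A is positive definite
  have hA : A.PosDef := by
    refine PosDef.of_dotProduct_mulVec_pos hAh fun x hx => ?_
    have hne : (Sum.elim x 0 : Fin r ⊕ Fin s → ℝ) ≠ 0 := by
      intro h; exact hx (funext fun i => congrFun h (Sum.inl i))
    have := hH.dotProduct_mulVec_pos hne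
    simpa [fromBlocks_mulVec, sumElim_dotProduct_sumElim, Function.star_sumElim] using this
  haveI iA : Invertible A := hA.isUnit.invertible
  -- the Schur complement is positive definite
  have hS : (C - Bᵀ * A⁻¹ * B).PosDef := by
    apply PosDef.of_dotProduct_mulVec_pos
    · rw [IsHermitian, conjTranspose_eq_transpose_of_trivial]
      rw [transpose_sub, transpose_mul, transpose_mul, transpose_transpose,
        transpose_nonsing_inv, hAsymm.eq, hCsymm.eq, Matrix.mul_assoc]
    · intro y hy
      have hBH : (Bᵀ : Matrix (Fin s) (Fin r) ℝ) = Bᴴ :=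
        (conjTranspose_eq_transpose_of_trivial B).symm
      have key := schur_complement_eq₁₁ B C (-((A⁻¹ * B) *ᵥ y)) y hAh
      rw [← hBH] at key
      have hne : (Sum.elim (-((A⁻¹ * B) *ᵥ y)) y : Fin r ⊕ Fin s → ℝ) ≠ 0 := by
        intro h; exact hy (funext fun i => congrFun h (Sum.inr i))
      have hpos := hH.dotProduct_mulVec_pos hne
      rw [dotProduct_mulVec] at hpos
      rw [key] at hpos
      simpa [dotProduct_mulVec] using hpos.trans_eq (by simp [dotProduct_mulVec])
  haveI iS : Invertible (C - Bᵀ * A⁻¹ * B) := hS.isUnit.invertible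
  haveI iS' : Invertible (C - Bᵀ * ⅟A * B) := by rw [invOf_eq_nonsing_inv]; exact iS
  haveI iH : Invertible (fromBlocks A B Bᵀ C) := hH.isUnit.invertible
  have hinv : (fromBlocks A B Bᵀ C)⁻¹ =
      fromBlocks (A⁻¹ + A⁻¹ * B * (C - Bᵀ * A⁻¹ * B)⁻¹ * Bᵀ * A⁻¹)
        (-(A⁻¹ * B * (C - Bᵀ * A⁻¹ * B)⁻¹))
        (-((C - Bᵀ * A⁻¹ * B)⁻¹ * Bᵀ * A⁻¹)) ((C - Bᵀ * A⁻¹ * B)⁻¹) := by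
    rw [← invOf_eq_nonsing_inv (fromBlocks A B Bᵀ C), invOf_fromBlocks₁₁_eq]
    simp only [invOf_eq_nonsing_inv]
  constructor
  · -- first inequality
    apply opNorm2_le (add_nonneg (opNorm2_nonneg _) (opNorm2_nonneg _))
    intro x hx
    have hx0 : euclNorm (Sum.elim x 0 : Fin r ⊕ Fin s → ℝ) = 1 := by
      rw [euclNorm] at hx ⊢
      rw [sumElim_dotProduct_sumElim]
      simpa using hx
    have e1 : (A⁻¹ * B * (C - Bᵀ * A⁻¹ * B)⁻¹ * Bᵀ * A⁻¹) *ᵥ x =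
        ((fromBlocks A B Bᵀ C)⁻¹ *ᵥ Sum.elim x 0) ∘ Sum.inl - A⁻¹ *ᵥ x := by
      rw [hinv, fromBlocks_mulVec]
      simp [add_mulVec]
    rw [e1]
    have t1 : euclNorm (((fromBlocks A B Bᵀ C)⁻¹ *ᵥ Sum.elim x 0) ∘ Sum.inl -
        A⁻¹ *ᵥ x) ≤ euclNorm (((fromBlocks A B Bᵀ C)⁻¹ *ᵥ Sum.elim x 0) ∘ Sum.inl)
        + euclNorm (A⁻¹ *ᵥ x) := by
      rw [euclNorm_eq, euclNorm_eq, euclNorm_eq]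
      simpa [toE] using norm_sub_le (toE (((fromBlocks A B Bᵀ C)⁻¹ *ᵥ Sum.elim x 0) ∘ Sum.inl))
        (toE (A⁻¹ *ᵥ x))
    have t2 : euclNorm (((fromBlocks A B Bᵀ C)⁻¹ *ᵥ Sum.elim x 0) ∘ Sum.inl) ≤
        euclNorm ((fromBlocks A B Bᵀ C)⁻¹ *ᵥ Sum.elim x 0) := by
      set w := (fromBlocks A B Bᵀ C)⁻¹ *ᵥ Sum.elim x 0
      rw [euclNorm, euclNorm]
      apply Real.sqrt_le_sqrt
      have : w ⬝ᵥ w = (w ∘ Sum.inl) ⬝ᵥ (w ∘ Sum.inl) + (w ∘ Sum.inr) ⬝ᵥ (w ∘ Sum.inr) := by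
        rw [dotProduct, dotProduct, dotProduct, Fintype.sum_sum_type]; rfl
      rw [this]
      have := dot_self_nonneg (w ∘ Sum.inr)
      linarith
    have t3 := le_opNorm2 (fromBlocks A B Bᵀ C)⁻¹ hx0
    have t4 := le_opNorm2 A⁻¹ hx
    linarith
  · -- second inequality
    have b1 : opNorm2 A⁻¹ ≤ 1 / lam := by
      apply invBound hA.det_pos.ne'.isUnit hlam
      intro x
      have := hlo (Sum.elim x 0)
      simpa [fromBlocks_mulVec, sumElim_dotProduct_sumElim] using this
    have b2 : opNorm2 (fromBlocks A B Bᵀ C)⁻¹ ≤ 1 / lam :=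
      invBound hH.det_pos.ne'.isUnit hlam hlo
    have : (2 : ℝ) / lam = 1 / lam + 1 / lam := by ring
    rw [this]
    exact add_le_add b1 b2
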